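/- Let x ∈ ℝⁿ and let S ⊆ ℝⁿ satisfy S ⊆ {y | g(y) > 0} ∩ {y | l(y) > 0}. Suppose π_H is a control policy rendering S robustly invariant, i.e., for all y ∈ S and all d ∈ D, f(y, π_H(y), d) ∈ S. Suppose π_V is a control policy such that for every disturbance policy π_d, the closed-loop trajectory (x^V_t) from x under (π_V, π_d) admits some τ ∈ ℕ with x^V_τ ∈ S and l(x^V_t) > 0 for all t ≤ τ. Then the switching policy π defined by π(y) = π_H(y) if y ∈ S and π(y) = π_V(y) otherwise, achieves reach-avoid-stay from x: for every disturbance policy π_d, the closed-loop trajectory (x_t) from x under (π, π_d) satisfies l(x_t) > 0 for all t ∈ ℕ and there exists τ ∈ ℕ with x_t ∈ S (hence g(x_t) > 0) for all t ≥ τ; in particular x ∈ RAS. -/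

import Mathlib

/-!
Run the reaching policy `π_V` until the trajectory first enters `S`. Up to that time the
switching policy coincides with `π_V`, so the two closed-loop trajectories agree and stay safe;
from then on the switching policy uses `π_H`, and robust invariance keeps the trajectory in
`S ⊆ {g > 0} ∩ {l > 0}` forever.
-/

open Set

noncomputable section

/-- One-step closed-loop map of the system `x_{t+1} = f(x_t, π_u(x_t), π_d(x_t))`
under a control policy `πu : ℝⁿ → U` and a disturbance policy `πd : ℝⁿ → D`.
The closed-loop trajectory from `x` is `t ↦ (cl f πu πd)^[t] x`. -/
def cl {n mu md : ℕ} {U : Set (Fin mu → ℝ)} {D : Set (Fin md → ℝ)}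
    (f : (Fin n → ℝ) → (Fin mu → ℝ) → (Fin md → ℝ) → (Fin n → ℝ))
    (πu : (Fin n → ℝ) → U) (πd : (Fin n → ℝ) → D) :
    (Fin n → ℝ) → (Fin n → ℝ) :=
  fun y => f y (πu y) (πd y)

/-- The reach-avoid-stay set `RAS`. -/
def RASset {n mu md : ℕ} (U : Set (Fin mu → ℝ)) (D : Set (Fin md → ℝ))
    (f : (Fin n → ℝ) → (Fin mu → ℝ) → (Fin md → ℝ) → (Fin n → ℝ))
    (g l : (Fin n → ℝ) → ℝ) : Set (Fin n → ℝ) :=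
  {x | ∃ πu : (Fin n → ℝ) → U, ∀ πd : (Fin n → ℝ) → D,
      (∀ t : ℕ, 0 < l ((cl f πu πd)^[t] x)) ∧
      ∃ τ : ℕ, ∀ t : ℕ, τ ≤ t → 0 < g ((cl f πu πd)^[t] x)}

/-- The robust viability kernel `AS`. -/
def ASset {n mu md : ℕ} (U : Set (Fin mu → ℝ)) (D : Set (Fin md → ℝ))
    (f : (Fin n → ℝ) → (Fin mu → ℝ) → (Fin md → ℝ) → (Fin n → ℝ))
    (g l : (Fin n → ℝ) → ℝ) : Set (Fin n → ℝ) :=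
  {x | ∃ πu : (Fin n → ℝ) → U, ∀ πd : (Fin n → ℝ) → D,
      ∀ t : ℕ, 0 < l ((cl f πu πd)^[t] x) ∧ 0 < g ((cl f πu πd)^[t] x)}

/-- The discounted value function
`H(x) = sup_{π_u} inf_{π_d} inf_t γ^t min(g(x_t), l(x_t))`. -/
def Hval {n mu md : ℕ} (U : Set (Fin mu → ℝ)) (D : Set (Fin md → ℝ))
    (f : (Fin n → ℝ) → (Fin mu → ℝ) → (Fin md → ℝ) → (Fin n → ℝ))
    (γ : ℝ) (g l : (Fin n → ℝ) → ℝ) (x : Fin n → ℝ) : ℝ :=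
  ⨆ πu : (Fin n → ℝ) → U, ⨅ πd : (Fin n → ℝ) → D, ⨅ t : ℕ,
    γ ^ t * min (g ((cl f πu πd)^[t] x)) (l ((cl f πu πd)^[t] x))

/-- `H_g(x) = H(x)` if `H(x) < 0`, and `g(x)` otherwise. -/
def Hg {n mu md : ℕ} (U : Set (Fin mu → ℝ)) (D : Set (Fin md → ℝ))
    (f : (Fin n → ℝ) → (Fin mu → ℝ) → (Fin md → ℝ) → (Fin n → ℝ))
    (γ : ℝ) (g l : (Fin n → ℝ) → ℝ) (x : Fin n → ℝ) : ℝ :=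
  if Hval U D f γ g l x < 0 then Hval U D f γ g l x else g x

/-- The discounted value function
`V(x) = sup_{π_u} inf_{π_d} sup_t min( γ^t H_g(x_t), inf_{s ≤ t} γ^s l(x_s) )`. -/
def Vval {n mu md : ℕ} (U : Set (Fin mu → ℝ)) (D : Set (Fin md → ℝ))
    (f : (Fin n → ℝ) → (Fin mu → ℝ) → (Fin md → ℝ) → (Fin n → ℝ))
    (γ : ℝ) (g l : (Fin n → ℝ) → ℝ) (x : Fin n → ℝ) : ℝ :=
  ⨆ πu : (Fin n → ℝ) → U, ⨅ πd : (Fin n → ℝ) → D, ⨆ t : ℕ,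
    min (γ ^ t * Hg U D f γ g l ((cl f πu πd)^[t] x))
      (⨅ s : Fin (t + 1), γ ^ (s : ℕ) * l ((cl f πu πd)^[(s : ℕ)] x))

section Iterate

variable {α : Type*} {F G : α → α} {S : Set α} {x : α}

theorem iterate_eq_of_eqOn_compl (hFG : EqOn F G Sᶜ) {t : ℕ} (hG : ∀ s < t, G^[s] x ∉ S) :
    F^[t] x = G^[t] x := by
  induction t with
  | zero => rfl
  | succ t ih =>
    have hprev : F^[t] x = G^[t] x := ih fun s hs => hG s (hs.trans t.lt_succ_self)
    rw [Function.iterate_succ_apply', Function.iterate_succ_apply', hprev]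
    exact hFG (hG t t.lt_succ_self)

theorem exists_iterate_eq_and_iterate_mem_of_mapsTo (hFG : EqOn F G Sᶜ) (hF : MapsTo F S S)
    {τ : ℕ} (hτ : G^[τ] x ∈ S) :
    ∃ N ≤ τ, (∀ t ≤ N, F^[t] x = G^[t] x) ∧ ∀ t, N ≤ t → F^[t] x ∈ S := by
  classical
  have hex : ∃ t, G^[t] x ∈ S := ⟨τ, hτ⟩
  have hagree : ∀ t ≤ Nat.find hex, F^[t] x = G^[t] x := fun t ht =>
    iterate_eq_of_eqOn_compl hFG fun s hs => Nat.find_min hex (hs.trans_le ht)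
  have hentry : F^[Nat.find hex] x ∈ S := by
    rw [hagree _ le_rfl]
    exact Nat.find_spec hex
  refine ⟨Nat.find hex, Nat.find_min' hex hτ, hagree, fun t ht => ?_⟩
  rw [← Nat.sub_add_cancel ht, Function.iterate_add_apply]
  exact (hF.iterate _) hentry

end Iterate

section Switching

variable {n mu md : ℕ} {U : Set (Fin mu → ℝ)} {D : Set (Fin md → ℝ)}
  {f : (Fin n → ℝ) → (Fin mu → ℝ) → (Fin md → ℝ) → (Fin n → ℝ)}
  {S : Set (Fin n → ℝ)} [DecidablePred (· ∈ S)] {πH πV : (Fin n → ℝ) → U}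

theorem cl_switch_eqOn_compl (πd : (Fin n → ℝ) → D) :
    EqOn (cl f (fun y => if y ∈ S then πH y else πV y) πd) (cl f πV πd) Sᶜ := fun y hy => by
  simp only [cl, if_neg (show y ∉ S from hy)]

theorem cl_switch_mapsTo (hInv : ∀ y ∈ S, ∀ d ∈ D, f y (πH y) d ∈ S) (πd : (Fin n → ℝ) → D) :
    MapsTo (cl f (fun y => if y ∈ S then πH y else πV y) πd) S S := fun y hy => by
  simpa only [cl, if_pos hy] using hInv y hy _ (πd y).2

theorem cl_switch_safe_and_eventually_mem {g l : (Fin n → ℝ) → ℝ}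
    (hS : S ⊆ {y | 0 < g y} ∩ {y | 0 < l y}) (hInv : ∀ y ∈ S, ∀ d ∈ D, f y (πH y) d ∈ S)
    {x : Fin n → ℝ} {πd : (Fin n → ℝ) → D}
    (hReach : ∃ τ : ℕ, (cl f πV πd)^[τ] x ∈ S ∧ ∀ t ≤ τ, 0 < l ((cl f πV πd)^[t] x)) :
    (∀ t : ℕ, 0 < l ((cl f (fun y => if y ∈ S then πH y else πV y) πd)^[t] x)) ∧
      ∃ τ : ℕ, ∀ t : ℕ, τ ≤ t →
        (cl f (fun y => if y ∈ S then πH y else πV y) πd)^[t] x ∈ S ∧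
        0 < g ((cl f (fun y => if y ∈ S then πH y else πV y) πd)^[t] x) := by
  obtain ⟨τ, hτS, hsafe⟩ := hReach
  obtain ⟨N, hNτ, hagree, hstay⟩ := exists_iterate_eq_and_iterate_mem_of_mapsTo
    (cl_switch_eqOn_compl πd) (cl_switch_mapsTo hInv πd) hτS
  refine ⟨fun t => ?_, N, fun t ht => ⟨hstay t ht, (hS (hstay t ht)).1⟩⟩
  rcases le_total t N with hle | hge
  · rw [hagree t hle]
    exact hsafe t (hle.trans hNτ)
  · exact (hS (hstay t hge)).2

end Switching

open Classical in
theorem switching_policy_achieves_RAS_of_invariant_general {n mu md : ℕ}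
    (U : Set (Fin mu → ℝ)) (D : Set (Fin md → ℝ))
    (f : (Fin n → ℝ) → (Fin mu → ℝ) → (Fin md → ℝ) → (Fin n → ℝ))
    (g l : (Fin n → ℝ) → ℝ)
    (S : Set (Fin n → ℝ))
    (hS : S ⊆ {y | 0 < g y} ∩ {y | 0 < l y})
    (πH πV : (Fin n → ℝ) → U)
    (hInv : ∀ y ∈ S, ∀ d ∈ D, f y (πH y) d ∈ S)
    (x : Fin n → ℝ)
    (hReach : ∀ πd : (Fin n → ℝ) → D,
      ∃ τ : ℕ, (cl f πV πd)^[τ] x ∈ S ∧ ∀ t : ℕ, t ≤ τ → 0 < l ((cl f πV πd)^[t] x)) :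
    (∀ πd : (Fin n → ℝ) → D,
      (∀ t : ℕ, 0 < l ((cl f (fun y => if y ∈ S then πH y else πV y) πd)^[t] x)) ∧
      ∃ τ : ℕ, ∀ t : ℕ, τ ≤ t →
        (cl f (fun y => if y ∈ S then πH y else πV y) πd)^[t] x ∈ S ∧
        0 < g ((cl f (fun y => if y ∈ S then πH y else πV y) πd)^[t] x)) ∧
    x ∈ RASset U D f g l := by
  have hswitch := fun πd => cl_switch_safe_and_eventually_mem hS hInv (hReach πd)
  exact ⟨hswitch, _, fun πd =>
    ⟨(hswitch πd).1, (hswitch πd).2.imp fun _ h t ht => (h t ht).2⟩⟩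

open Classical in
/-- if `S ⊆ {g > 0} ∩ {l > 0}` is robustly invariant under `π_H` and `π_V`
safely reaches `S` from `x` against every disturbance policy, then the switching policy
`π(y) = π_H(y)` if `y ∈ S`, else `π_V(y)`, achieves reach-avoid-stay from `x`;
in particular `x ∈ RAS`. -/
theorem switching_policy_achieves_RAS_of_invariant {n mu md : ℕ}
    (U : Set (Fin mu → ℝ)) (D : Set (Fin md → ℝ))
    (hU : U.Nonempty) (hD : D.Nonempty)
    (f : (Fin n → ℝ) → (Fin mu → ℝ) → (Fin md → ℝ) → (Fin n → ℝ))
    (g l : (Fin n → ℝ) → ℝ)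
    (hg : ∃ M, ∀ y, |g y| ≤ M) (hl : ∃ M, ∀ y, |l y| ≤ M)
    (S : Set (Fin n → ℝ))
    (hS : S ⊆ {y | 0 < g y} ∩ {y | 0 < l y})
    (πH πV : (Fin n → ℝ) → U)
    (hInv : ∀ y ∈ S, ∀ d ∈ D, f y (πH y) d ∈ S)
    (x : Fin n → ℝ)
    (hReach : ∀ πd : (Fin n → ℝ) → D,
      ∃ τ : ℕ, (cl f πV πd)^[τ] x ∈ S ∧ ∀ t : ℕ, t ≤ τ → 0 < l ((cl f πV πd)^[t] x)) :
    (∀ πd : (Fin n → ℝ) → D,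
      (∀ t : ℕ, 0 < l ((cl f (fun y => if y ∈ S then πH y else πV y) πd)^[t] x)) ∧
      ∃ τ : ℕ, ∀ t : ℕ, τ ≤ t →
        (cl f (fun y => if y ∈ S then πH y else πV y) πd)^[t] x ∈ S ∧
        0 < g ((cl f (fun y => if y ∈ S then πH y else πV y) πd)^[t] x)) ∧
    x ∈ RASset U D f g l :=
  switching_policy_achieves_RAS_of_invariant_general U D f g l S hS πH πV hInv x hReach
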